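/- Let τ ∈ B be a (q+1)-simplex with τ_B̄ ∈ B̄ ∖ (A∩B)_B̄, and let σ ∈ A ∩ B be a q-dimensional facet of τ, so that σ_B̄ = [b̄_{i₀},…,b̄_{i_q}] ∈ (A∩B)_B̄ is a facet of τ_B̄. Then there is exactly one extended 𝒱-trajectory P in X̃ beginning τ_B̄, σ_B̄, … whose terminal simplex is 𝒱-critical; its terminal simplex is σ_Ā = [ā_{i₀},…,ā_{i_q}] ∈ (A∩B)_Ā, and its weight is w(P) = ⟨τ_B̄, σ_B̄⟩ = ⟨τ, σ⟩. -/

import Mathlib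

open scoped Classical

noncomputable section

namespace DMT

variable {V : Type*} {U : Type*}

/-- An abstract simplicial complex: a nonempty collection of nonempty finite
sets of vertices that is closed under taking nonempty subsets. -/
def IsComplex (K : Set (Finset V)) : Prop :=
  K.Nonempty ∧ ∀ σ ∈ K, σ.Nonempty ∧ ∀ τ : Finset V, τ ⊆ σ → τ.Nonempty → τ ∈ K

/-- The incidence number `⟨τ, σ⟩` of `σ` with respect to `τ`, where simplices are
oriented by listing their vertices increasingly: it is `(-1)^i` if `σ` is obtained
from `τ` by deleting the `i`-th vertex, and `0` if `σ` is not a facet of `τ`. -/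
def incidence [LinearOrder V] (τ σ : Finset V) : ℤ :=
  if σ ⊆ τ ∧ τ.card = σ.card + 1 then
    ∑ v ∈ τ \ σ, (-1 : ℤ) ^ (τ.filter fun u => u < v).card
  else 0

/-- A discrete vector field on a complex `K`: a set of pairs `(σ, τ)` of simplices of `K`
with `σ` a facet of `τ`, such that every simplex appears in at most one pair. -/
def IsDVF (K : Set (Finset U)) (W : Set (Finset U × Finset U)) : Prop :=
  (∀ p ∈ W, p.1 ∈ K ∧ p.2 ∈ K ∧ p.1 ⊆ p.2 ∧ p.2.card = p.1.card + 1) ∧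
  ∀ p ∈ W, ∀ p' ∈ W, (p.1 = p'.1 ∨ p.1 = p'.2 ∨ p.2 = p'.1 ∨ p.2 = p'.2) → p = p'

/-- A simplex is critical for `W` if it appears in no pair of `W`. -/
def IsCritical (W : Set (Finset U × Finset U)) (σ : Finset U) : Prop :=
  ∀ p ∈ W, p.1 ≠ σ ∧ p.2 ≠ σ

/-- The set of `q`-dimensional `W`-critical simplices of `K`. -/
def critSet (K : Set (Finset U)) (W : Set (Finset U × Finset U)) (q : ℕ) : Set (Finset U) :=
  {σ | σ ∈ K ∧ σ.card = q + 1 ∧ IsCritical W σ}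

/-- A `W`-trajectory `τ₀, σ₁, τ₁, …, σ_k, τ_k`. -/
structure Traj (W : Set (Finset U × Finset U)) where
  k : ℕ
  t : ℕ → Finset U
  s : ℕ → Finset U
  dim_t : ∀ i ≤ k, (t i).card = (t 0).card
  dim_s : ∀ i, 1 ≤ i → i ≤ k → (s i).card + 1 = (t 0).card
  mem : ∀ i, 1 ≤ i → i ≤ k → (s i, t i) ∈ W
  sub : ∀ i, 1 ≤ i → i ≤ k → s i ⊆ t (i - 1)
  nmem : ∀ i, 1 ≤ i → i ≤ k → (s i, t (i - 1)) ∉ W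

/-- `W` is acyclic: there is no nontrivial closed `W`-trajectory. -/
def IsAcyclic (W : Set (Finset U × Finset U)) : Prop :=
  ¬ ∃ P : Traj W, 1 < P.k ∧ P.t 0 = P.t P.k

/-- A gradient vector field on `K`: an acyclic discrete vector field. -/
def IsGVF (K : Set (Finset U)) (W : Set (Finset U × Finset U)) : Prop :=
  IsDVF K W ∧ IsAcyclic W

/-- An extended `W`-trajectory `τ₀, σ₁, τ₁, …, σ_k, τ_k, σ_{k+1}`, with
`(σᵢ, τᵢ) ∈ W` for `1 ≤ i ≤ k`, and `σᵢ ⊆ τ_{i-1}`, `(σᵢ, τ_{i-1}) ∉ W` for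
`1 ≤ i ≤ k + 1`.  (The values of `t` and `s` outside the relevant ranges are
normalized to `∅`.) -/
structure ExtTraj (W : Set (Finset U × Finset U)) where
  k : ℕ
  t : ℕ → Finset U
  s : ℕ → Finset U
  dim_t : ∀ i ≤ k, (t i).card = (t 0).card
  dim_s : ∀ i, 1 ≤ i → i ≤ k + 1 → (s i).card + 1 = (t 0).card
  mem : ∀ i, 1 ≤ i → i ≤ k → (s i, t i) ∈ W
  sub : ∀ i, 1 ≤ i → i ≤ k + 1 → s i ⊆ t (i - 1)
  nmem : ∀ i, 1 ≤ i → i ≤ k + 1 → (s i, t (i - 1)) ∉ W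
  pad_t : ∀ i, k < i → t i = ∅
  pad_s : ∀ i, i = 0 ∨ k + 1 < i → s i = ∅

/-- The weight of an extended trajectory. -/
def ExtTraj.weight [LinearOrder U] {W : Set (Finset U × Finset U)} (P : ExtTraj W) : ℤ :=
  (∏ i ∈ Finset.range P.k,
      -(incidence (P.t i) (P.s (i + 1)) * incidence (P.t (i + 1)) (P.s (i + 1)))) *
    incidence (P.t P.k) (P.s (P.k + 1))

/-- `Γ(τ, σ)`: the extended `W`-trajectories with initial simplex `τ` and terminal
simplex `σ`. -/
def Gamma (W : Set (Finset U × Finset U)) (τ σ : Finset U) : Set (ExtTraj W) :=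
  {P | P.t 0 = τ ∧ P.s (P.k + 1) = σ}

/-- The Thom–Smale boundary coefficient `Σ_{P ∈ Γ(τ,σ)} w(P)`. -/
def tsCoeff [LinearOrder U] (W : Set (Finset U × Finset U)) (τ σ : Finset U) : ℤ :=
  ∑ᶠ P ∈ Gamma W τ σ, ExtTraj.weight P

/-- The copy of a complex under a vertex map. -/
def copy [DecidableEq U] (f : V → U) (K : Set (Finset V)) : Set (Finset U) :=
  {σ | ∃ γ ∈ K, σ = γ.image f}

/-- Pull a simplex of a copy back to the original vertex set. -/
def pull [Fintype V] [DecidableEq U] (f : V → U) (σ : Finset U) : Finset V :=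
  Finset.univ.filter fun v => f v ∈ σ

/-- The ground simplex of a simplex of the prism (with `a`-vertices and `b`-vertices). -/
def GS [Fintype V] [DecidableEq U] (a b : V → U) (σ : Finset U) : Finset V :=
  Finset.univ.filter fun v => a v ∈ σ ∨ b v ∈ σ

/-- The simplex `{a_{i₀}, …, a_{i_r}, b_{i_r}, …, b_{i_q}}` of the prism over
`γ = {v_{i₀} < … < v_{i_q}}`, with pivot `v = v_{i_r}`. -/
def mixA [LinearOrder V] [DecidableEq U] (a b : V → U) (γ : Finset V) (v : V) : Finset U :=
  (γ.filter fun u => u ≤ v).image a ∪ (γ.filter fun u => v ≤ u).image b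

/-- The simplex `{a_{i₀}, …, a_{i_{r-1}}, b_{i_r}, …, b_{i_q}}` of the prism over
`γ`, with pivot `v = v_{i_r}`. -/
def mixB [LinearOrder V] [DecidableEq U] (a b : V → U) (γ : Finset V) (v : V) : Finset U :=
  (γ.filter fun u => u < v).image a ∪ (γ.filter fun u => v ≤ u).image b

/-- `A_γ`. -/
def AsetOf [LinearOrder V] [DecidableEq U] (a b : V → U) (γ : Finset V) : Set (Finset U) :=
  {σ | ∃ v ∈ γ, σ = mixA a b γ v}

/-- `B_γ`. -/
def BsetOf [LinearOrder V] [DecidableEq U] (a b : V → U) (γ : Finset V) : Set (Finset U) :=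
  {σ | ∃ v ∈ γ, σ = mixB a b γ v} ∪ {γ.image a}

/-- `S_γ = A_γ ∪ B_γ`. -/
def SsetOf [LinearOrder V] [DecidableEq U] (a b : V → U) (γ : Finset V) : Set (Finset U) :=
  AsetOf a b γ ∪ BsetOf a b γ

/-- The prism `ℙ(C)` over the complex `C`, realized with `a`-vertices and `b`-vertices. -/
def prism [LinearOrder V] [DecidableEq U] (a b : V → U) (C : Set (Finset V)) :
    Set (Finset U) :=
  ⋃ γ ∈ C, SsetOf a b γ

/-- The interior simplices of the prism. -/
def prismInt [LinearOrder V] [DecidableEq U] (a b : V → U) (C : Set (Finset V)) :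
    Set (Finset U) :=
  prism a b C \ (copy a C ∪ copy b C)

/-- The complex `X̃ = Ā ∪ ℙ((A ∩ B)‾) ∪ B̄`. -/
def tilde [LinearOrder V] [DecidableEq U] (a b : V → U) (A B : Set (Finset V)) :
    Set (Finset U) :=
  copy a A ∪ prism a b (A ∩ B) ∪ copy b B

/-- The prism pairing `𝒱`: for each `γ ∈ C` and `v ∈ γ`, the pair
`([a_{i₀},…,a_{i_{r-1}}, b_{i_r},…,b_{i_q}], [a_{i₀},…,a_{i_r}, b_{i_r},…,b_{i_q}])`. -/
def prismVF [LinearOrder V] [DecidableEq U] (a b : V → U) (C : Set (Finset V)) :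
    Set (Finset U × Finset U) :=
  {p | ∃ γ ∈ C, ∃ v ∈ γ, p = (mixB a b γ v, mixA a b γ v)}

/-- `v` is the minimum vertex of `γ`. -/
def isMin [Preorder V] (γ : Finset V) (v : V) : Prop :=
  v ∈ γ ∧ ∀ u ∈ γ, v ≤ u

/-- The pairing `W'` of the interior simplices of the prism, induced by the gradient
vector field `WC` on the copy (under `c`) of the intersection complex `C`. -/
def WprimeSet [Fintype V] [LinearOrder V] [DecidableEq U] (a b c : V → U)
    (C : Set (Finset V)) (WC : Set (Finset U × Finset U)) : Set (Finset U × Finset U) :=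
  {p | ∃ pr ∈ WC, ∃ v, isMin (pull c pr.1) v ∧
      p = (mixA a b (pull c pr.1) v, mixA a b (pull c pr.2) v)} ∪
  {p | ∃ pr ∈ WC, ∃ v vm am, isMin (pull c pr.2) vm ∧ isMin (pull c pr.1) am ∧
      v ∈ pull c pr.2 ∧ v ≠ vm ∧
      p = (mixB a b (pull c pr.2) v, mixA a b (pull c pr.2) (if v = am then vm else v))} ∪
  {p | ∃ pr ∈ WC, ∃ v am, isMin (pull c pr.1) am ∧ v ∈ pull c pr.1 ∧ v ≠ am ∧
      p = (mixB a b (pull c pr.1) v, mixA a b (pull c pr.1) v)} ∪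
  {p | ∃ γ : Finset V, γ ∈ C ∧ IsCritical WC (γ.image c) ∧
      ∃ v vm, isMin γ vm ∧ v ∈ γ ∧ v ≠ vm ∧ p = (mixB a b γ v, mixA a b γ v)}

/-- The discrete vector field `W = W_Ā ∪ W_B̄ ∪ W'` on `X̃`. -/
def Wfield [Fintype V] [LinearOrder V] [DecidableEq U] (a b c : V → U)
    (C : Set (Finset V)) (WA WB WC : Set (Finset U × Finset U)) :
    Set (Finset U × Finset U) :=
  WA ∪ WB ∪ WprimeSet a b c C WC

/-- Transfer a simplex of the copy under `c` to the corresponding simplex of the copy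
under `f`. -/
def transferMap [Fintype V] [DecidableEq U] (c f : V → U) (σ : Finset U) : Finset U :=
  (pull c σ).image f

/-- A mixed (Mayer–Vietoris) trajectory: a descending extended trajectory
`τ₀, σ₁, τ₁, …, σ_p, τ_p` for `WC` in the copy of the intersection, transferred by
`tr` into another copy, followed by an ascending path
`τ'_p, α_p, τ'_{p+1}, …, α_{p+l-1}, τ'_{p+l}` for `WD`. -/
structure MixTraj (WC WD : Set (Finset U × Finset U)) (tr : Finset U → Finset U) where
  p : ℕ
  l : ℕ
  t : ℕ → Finset U
  s : ℕ → Finset U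
  t' : ℕ → Finset U
  a' : ℕ → Finset U
  dim_t : ∀ i ≤ p, (t i).card = (t 0).card
  dim_s : ∀ i, 1 ≤ i → i ≤ p → (s i).card + 1 = (t 0).card
  dim_t' : ∀ i, p ≤ i → i ≤ p + l → (t' i).card = (t 0).card
  dim_a' : ∀ i, p ≤ i → i < p + l → (a' i).card = (t 0).card + 1
  mem_s : ∀ i, 1 ≤ i → i ≤ p → (s i, t i) ∈ WC
  sub_s : ∀ i, 1 ≤ i → i ≤ p → s i ⊆ t (i - 1)
  nmem_s : ∀ i, 1 ≤ i → i ≤ p → (s i, t (i - 1)) ∉ WC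
  link : t' p = tr (t p)
  mem_a : ∀ i, p ≤ i → i < p + l → (t' i, a' i) ∈ WD
  sub_a : ∀ i, p + 1 ≤ i → i ≤ p + l → t' i ⊆ a' (i - 1)
  nmem_a : ∀ i, p + 1 ≤ i → i ≤ p + l → (t' i, a' (i - 1)) ∉ WD
  pad_t : ∀ i, p < i → t i = ∅
  pad_s : ∀ i, i = 0 ∨ p < i → s i = ∅
  pad_t' : ∀ i, i < p ∨ p + l < i → t' i = ∅
  pad_a' : ∀ i, i < p ∨ p + l ≤ i → a' i = ∅

/-- The product of incidence signs along a mixed trajectory (without the leading sign). -/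
def MixTraj.wcore [LinearOrder U] {WC WD : Set (Finset U × Finset U)}
    {tr : Finset U → Finset U} (P : MixTraj WC WD tr) : ℤ :=
  (∏ i ∈ Finset.range P.p,
      -(incidence (P.t i) (P.s (i + 1)) * incidence (P.t (i + 1)) (P.s (i + 1)))) *
  ∏ i ∈ Finset.range P.l,
      -(incidence (P.a' (P.p + i)) (P.t' (P.p + i)) *
        incidence (P.a' (P.p + i)) (P.t' (P.p + i + 1)))

/-- A Mayer–Vietoris trajectory: one of the five kinds. -/
inductive MVTraj (WA WB WC : Set (Finset U × Finset U)) (trA trB : Finset U → Finset U)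
  | viaA : ExtTraj WA → MVTraj WA WB WC trA trB
  | viaB : ExtTraj WB → MVTraj WA WB WC trA trB
  | viaC : ExtTraj WC → MVTraj WA WB WC trA trB
  | crossA : MixTraj WC WA trA → MVTraj WA WB WC trA trB
  | crossB : MixTraj WC WB trB → MVTraj WA WB WC trA trB

/-- The weight `w_M` of a Mayer–Vietoris trajectory. -/
def MVTraj.wM [LinearOrder U] {WA WB WC : Set (Finset U × Finset U)}
    {trA trB : Finset U → Finset U} : MVTraj WA WB WC trA trB → ℤ
  | .viaA P => P.weight
  | .viaB P => P.weight
  | .viaC P => -P.weight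
  | .crossA P => -P.wcore
  | .crossB P => P.wcore

/-- A Mayer–Vietoris trajectory goes from `β` to `α` (with the required criticality of
the endpoints in the respective copies `Abar`, `Bbar`, `Cbar`). -/
def MVTraj.ends {WA WB WC : Set (Finset U × Finset U)} {trA trB : Finset U → Finset U}
    (Abar Bbar Cbar : Set (Finset U)) :
    MVTraj WA WB WC trA trB → Finset U → Finset U → Prop
  | .viaA T, β, α => T.t 0 = β ∧ T.s (T.k + 1) = α ∧
      β ∈ Abar ∧ IsCritical WA β ∧ α ∈ Abar ∧ IsCritical WA α
  | .viaB T, β, α => T.t 0 = β ∧ T.s (T.k + 1) = α ∧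
      β ∈ Bbar ∧ IsCritical WB β ∧ α ∈ Bbar ∧ IsCritical WB α
  | .viaC T, β, α => T.t 0 = β ∧ T.s (T.k + 1) = α ∧
      β ∈ Cbar ∧ IsCritical WC β ∧ α ∈ Cbar ∧ IsCritical WC α
  | .crossA T, β, α => T.t 0 = β ∧ T.t' (T.p + T.l) = α ∧
      β ∈ Cbar ∧ IsCritical WC β ∧ α ∈ Abar ∧ IsCritical WA α
  | .crossB T, β, α => T.t 0 = β ∧ T.t' (T.p + T.l) = α ∧
      β ∈ Cbar ∧ IsCritical WC β ∧ α ∈ Bbar ∧ IsCritical WB α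

/-- `MV(β, α)`: the set of Mayer–Vietoris trajectories from `β` to `α`. -/
def MVset (WA WB WC : Set (Finset U × Finset U)) (trA trB : Finset U → Finset U)
    (Abar Bbar Cbar : Set (Finset U)) (β α : Finset U) :
    Set (MVTraj WA WB WC trA trB) :=
  {P | MVTraj.ends Abar Bbar Cbar P β α}

/-- The Mayer–Vietoris boundary coefficient `Σ_{P ∈ MV(β,α)} w_M(P)`. -/
def mvCoeff [LinearOrder U] (WA WB WC : Set (Finset U × Finset U))
    (trA trB : Finset U → Finset U) (Abar Bbar Cbar : Set (Finset U))
    (β α : Finset U) : ℤ :=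
  ∑ᶠ P ∈ MVset WA WB WC trA trB Abar Bbar Cbar β α, MVTraj.wM P

/-- The generating sets `D_q(X)`. -/
def Dset (Abar Bbar Cbar : Set (Finset U)) (WA WB WC : Set (Finset U × Finset U)) :
    ℕ → Set (Finset U)
  | 0 => critSet Abar WA 0 ∪ critSet Bbar WB 0
  | (q + 1) => critSet Abar WA (q + 1) ∪ critSet Bbar WB (q + 1) ∪ critSet Cbar WC q

/-- The `q`-dimensional simplices of a complex. -/
def simpSet (K : Set (Finset V)) (q : ℕ) : Set (Finset V) :=
  {σ | σ ∈ K ∧ σ.card = q + 1}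

/-- The boundary homomorphism of a chain complex of free abelian groups, determined by a
matrix of coefficients. -/
def chainBoundary {ι κ : Type*} (coeff : ι → κ → ℤ) : (ι →₀ ℤ) →ₗ[ℤ] (κ →₀ ℤ) :=
  Finsupp.lsum ℤ fun i =>
    LinearMap.toSpanSingleton ℤ (κ →₀ ℤ) (∑ᶠ j : κ, coeff i j • Finsupp.single j 1)

/-- The family of boundary maps of the chain complex of free abelian groups with
generating sets `S q` and boundary coefficients `coeff` (with the convention that the
boundary in degree `0` is the zero map). -/
def fullBoundary {W : Type*} (S : ℕ → Set (Finset W)) (coeff : Finset W → Finset W → ℤ) :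
    ∀ q : ℕ, ((S q : Set (Finset W)) →₀ ℤ) →+ ((S (q - 1) : Set (Finset W)) →₀ ℤ)
  | 0 => 0
  | (q + 1) => (chainBoundary fun (i : (S (q + 1) : Set (Finset W))) (j : (S q : Set (Finset W))) =>
      coeff (i : Finset W) (j : Finset W)).toAddMonoidHom

/-- `ker d ⧸ im d'`. -/
abbrev homologyAt {L M N : Type*} [AddCommGroup L] [AddCommGroup M] [AddCommGroup N]
    (d : M →+ N) (d' : L →+ M) : Type _ :=
  (↥d.ker) ⧸ (AddSubgroup.comap d.ker.subtype d'.range)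

/-- The `q`-th homology group of the chain complex of free abelian groups with
generating sets `S` and boundary coefficients `coeff`. -/
abbrev homologyOf {W : Type*} (S : ℕ → Set (Finset W)) (coeff : Finset W → Finset W → ℤ)
    (q : ℕ) : Type _ :=
  homologyAt (fullBoundary S coeff q) (fullBoundary S coeff (q + 1))

/-- The map `f` from critical simplices of `X̃` to generators of the Mayer–Vietoris
complex: the identity on critical simplices of `Ā` and `B̄`, and the (copy in
`(A ∩ B)‾` of the) ground simplex on interior critical simplices of the prism. -/
def fmap [Fintype V] [LinearOrder V] [DecidableEq U] (a b c : V → U)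
    (C : Set (Finset V)) (τ : Finset U) : Finset U :=
  if τ ∈ prismInt a b C then (GS a b τ).image c else τ

/-- The simplex `[a_{i₀}, b_{i₀}, …, b_{i_{q-1}}]` of the prism over `γ`. -/
def aMinCopy [Fintype V] [LinearOrder V] [DecidableEq U] (a b : V → U) (γ : Finset V) :
    Finset U :=
  (γ.filter fun u => ∀ w ∈ γ, u ≤ w).image a ∪ γ.image b

/-- The map `g` from generators of the Mayer–Vietoris complex to critical simplices of
`X̃`: the identity on critical simplices of `Ā` and `B̄`, and
`[c_{i₀},…,c_{i_{q-1}}] ↦ [a_{i₀}, b_{i₀}, …, b_{i_{q-1}}]` on critical simplices of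
`(A ∩ B)‾`. -/
def gmap [Fintype V] [LinearOrder V] [DecidableEq U] (a b c : V → U)
    (Cbar : Set (Finset U)) (α : Finset U) : Finset U :=
  if α ∈ Cbar then aMinCopy a b (pull c α) else α


section Aux

variable {V : Type*} {U : Type*} [LinearOrder V] [LinearOrder U]
variable {a b : V → U} {γ γ' σ : Finset V} {v v' u w : V} {x : U}

lemma mem_mixA_iff :
    x ∈ mixA a b γ v ↔ (∃ u ∈ γ, u ≤ v ∧ x = a u) ∨ (∃ u ∈ γ, v ≤ u ∧ x = b u) := by
  simp only [mixA, Finset.mem_union, Finset.mem_image, Finset.mem_filter]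
  constructor
  · rintro (⟨u, ⟨h1, h2⟩, h3⟩ | ⟨u, ⟨h1, h2⟩, h3⟩)
    · exact Or.inl ⟨u, h1, h2, h3.symm⟩
    · exact Or.inr ⟨u, h1, h2, h3.symm⟩
  · rintro (⟨u, h1, h2, h3⟩ | ⟨u, h1, h2, h3⟩)
    · exact Or.inl ⟨u, ⟨h1, h2⟩, h3.symm⟩
    · exact Or.inr ⟨u, ⟨h1, h2⟩, h3.symm⟩

lemma mem_mixB_iff :
    x ∈ mixB a b γ v ↔ (∃ u ∈ γ, u < v ∧ x = a u) ∨ (∃ u ∈ γ, v ≤ u ∧ x = b u) := by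
  simp only [mixB, Finset.mem_union, Finset.mem_image, Finset.mem_filter]
  constructor
  · rintro (⟨u, ⟨h1, h2⟩, h3⟩ | ⟨u, ⟨h1, h2⟩, h3⟩)
    · exact Or.inl ⟨u, h1, h2, h3.symm⟩
    · exact Or.inr ⟨u, h1, h2, h3.symm⟩
  · rintro (⟨u, h1, h2, h3⟩ | ⟨u, h1, h2, h3⟩)
    · exact Or.inl ⟨u, ⟨h1, h2⟩, h3.symm⟩
    · exact Or.inr ⟨u, ⟨h1, h2⟩, h3.symm⟩

variable (ha : StrictMono a) (hb : StrictMono b) (hab : ∀ u v : V, a u ≠ b v)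

include ha hab in
lemma a_mem_mixA : a u ∈ mixA a b γ v ↔ u ∈ γ ∧ u ≤ v := by
  rw [mem_mixA_iff]
  constructor
  · rintro (⟨u', h1, h2, h3⟩ | ⟨u', h1, h2, h3⟩)
    · obtain rfl := ha.injective h3; exact ⟨h1, h2⟩
    · exact absurd h3 (hab u u')
  · rintro ⟨h1, h2⟩; exact Or.inl ⟨u, h1, h2, rfl⟩

include hb hab in
lemma b_mem_mixA : b u ∈ mixA a b γ v ↔ u ∈ γ ∧ v ≤ u := by
  rw [mem_mixA_iff]
  constructor
  · rintro (⟨u', h1, h2, h3⟩ | ⟨u', h1, h2, h3⟩)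
    · exact absurd h3.symm (hab u' u)
    · obtain rfl := hb.injective h3; exact ⟨h1, h2⟩
  · rintro ⟨h1, h2⟩; exact Or.inr ⟨u, h1, h2, rfl⟩

include ha hab in
lemma a_mem_mixB : a u ∈ mixB a b γ v ↔ u ∈ γ ∧ u < v := by
  rw [mem_mixB_iff]
  constructor
  · rintro (⟨u', h1, h2, h3⟩ | ⟨u', h1, h2, h3⟩)
    · obtain rfl := ha.injective h3; exact ⟨h1, h2⟩
    · exact absurd h3 (hab u u')
  · rintro ⟨h1, h2⟩; exact Or.inl ⟨u, h1, h2, rfl⟩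

include hb hab in
lemma b_mem_mixB : b u ∈ mixB a b γ v ↔ u ∈ γ ∧ v ≤ u := by
  rw [mem_mixB_iff]
  constructor
  · rintro (⟨u', h1, h2, h3⟩ | ⟨u', h1, h2, h3⟩)
    · exact absurd h3.symm (hab u' u)
    · obtain rfl := hb.injective h3; exact ⟨h1, h2⟩
  · rintro ⟨h1, h2⟩; exact Or.inr ⟨u, h1, h2, rfl⟩

include hab in
lemma a_not_mem_image_b : a u ∉ γ.image b := by
  simp only [Finset.mem_image, not_exists]
  rintro u' ⟨h1, h2⟩
  exact hab u u' h2.symm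

include hab in
lemma b_not_mem_image_a : b u ∉ γ.image a := by
  simp only [Finset.mem_image, not_exists]
  rintro u' ⟨h1, h2⟩
  exact hab u' u h2

include hab in
lemma disj_ab_images (s t : Finset V) : Disjoint (s.image a) (t.image b) := by
  rw [Finset.disjoint_left]
  rintro x hx hx'
  obtain ⟨u1, _, rfl⟩ := Finset.mem_image.mp hx
  exact a_not_mem_image_b hab hx'

include ha hb hab in
lemma card_mixA (hv : v ∈ γ) : (mixA a b γ v).card = γ.card + 1 := by
  rw [mixA, Finset.card_union_of_disjoint (disj_ab_images hab _ _),
    Finset.card_image_of_injective _ ha.injective,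
    Finset.card_image_of_injective _ hb.injective]
  have h1 : γ.filter (fun u => u ≤ v) = insert v (γ.filter fun u => u < v) := by
    ext u
    simp only [Finset.mem_filter, Finset.mem_insert]
    constructor
    · rintro ⟨h1, h2⟩
      rcases h2.lt_or_eq with h | h
      · exact Or.inr ⟨h1, h⟩
      · exact Or.inl h
    · rintro (rfl | ⟨h1, h2⟩)
      · exact ⟨hv, le_rfl⟩
      · exact ⟨h1, h2.le⟩
  have h2 : v ∉ γ.filter fun u => u < v := by simp
  rw [h1, Finset.card_insert_of_notMem h2]
  have h3 := Finset.card_filter_add_card_filter_not (s := γ) (p := fun u => u < v)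
  have h4 : (γ.filter fun u => ¬ u < v) = γ.filter fun u => v ≤ u := by
    ext u; simp [not_lt]
  rw [h4] at h3
  omega

include ha hb hab in
lemma card_mixB (hv : v ∈ γ) : (mixB a b γ v).card = γ.card := by
  rw [mixB, Finset.card_union_of_disjoint (disj_ab_images hab _ _),
    Finset.card_image_of_injective _ ha.injective,
    Finset.card_image_of_injective _ hb.injective]
  have h3 := Finset.card_filter_add_card_filter_not (s := γ) (p := fun u => u < v)
  have h4 : (γ.filter fun u => ¬ u < v) = γ.filter fun u => v ≤ u := by
    ext u; simp [not_lt]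
  rw [h4] at h3
  omega

include ha hb hab in
lemma mixB_inj (hv : v ∈ γ) (hv' : v' ∈ γ')
    (h : mixB a b γ v = mixB a b γ' v') : γ = γ' ∧ v = v' := by
  have hmem : ∀ u : V, u ∈ γ ↔ u ∈ γ' := by
    intro u
    constructor
    · intro hu
      rcases lt_or_ge u v with h1 | h1
      · have := (a_mem_mixB ha hab).mpr ⟨hu, h1⟩
        rw [h, a_mem_mixB ha hab] at this
        exact this.1
      · have := (b_mem_mixB hb hab).mpr ⟨hu, h1⟩
        rw [h, b_mem_mixB hb hab] at this
        exact this.1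
    · intro hu
      rcases lt_or_ge u v' with h1 | h1
      · have := (a_mem_mixB ha hab).mpr ⟨hu, h1⟩
        rw [← h, a_mem_mixB ha hab] at this
        exact this.1
      · have := (b_mem_mixB hb hab).mpr ⟨hu, h1⟩
        rw [← h, b_mem_mixB hb hab] at this
        exact this.1
  have hγ : γ = γ' := Finset.ext hmem
  subst hγ
  refine ⟨rfl, le_antisymm ?_ ?_⟩
  · have := (b_mem_mixB hb hab (γ := γ) (v := v')).mpr ⟨hv', le_rfl⟩
    rw [← h, b_mem_mixB hb hab] at this
    exact this.2
  · have := (b_mem_mixB hb hab (γ := γ) (v := v)).mpr ⟨hv, le_rfl⟩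
    rw [h, b_mem_mixB hb hab] at this
    exact this.2

include ha hb hab in
lemma mixA_inj (hv : v ∈ γ) (hv' : v' ∈ γ')
    (h : mixA a b γ v = mixA a b γ' v') : γ = γ' ∧ v = v' := by
  have hmem : ∀ u : V, u ∈ γ ↔ u ∈ γ' := by
    intro u
    constructor
    · intro hu
      rcases le_or_gt u v with h1 | h1
      · have := (a_mem_mixA ha hab).mpr ⟨hu, h1⟩
        rw [h, a_mem_mixA ha hab] at this
        exact this.1
      · have := (b_mem_mixA hb hab).mpr ⟨hu, h1.le⟩
        rw [h, b_mem_mixA hb hab] at this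
        exact this.1
    · intro hu
      rcases le_or_gt u v' with h1 | h1
      · have := (a_mem_mixA ha hab).mpr ⟨hu, h1⟩
        rw [← h, a_mem_mixA ha hab] at this
        exact this.1
      · have := (b_mem_mixA hb hab).mpr ⟨hu, h1.le⟩
        rw [← h, b_mem_mixA hb hab] at this
        exact this.1
  have hγ : γ = γ' := Finset.ext hmem
  subst hγ
  refine ⟨rfl, le_antisymm ?_ ?_⟩
  · have := (b_mem_mixA hb hab (γ := γ) (v := v')).mpr ⟨hv', le_rfl⟩
    rw [← h, b_mem_mixA hb hab] at this
    exact this.2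
  · have := (b_mem_mixA hb hab (γ := γ) (v := v)).mpr ⟨hv, le_rfl⟩
    rw [h, b_mem_mixA hb hab] at this
    exact this.2

include ha hb hab in
lemma mixB_eq_erase (hv : v ∈ γ) : mixB a b γ v = (mixA a b γ v).erase (a v) := by
  ext x
  rw [Finset.mem_erase, mem_mixB_iff, mem_mixA_iff]
  constructor
  · rintro (⟨u, h1, h2, rfl⟩ | ⟨u, h1, h2, rfl⟩)
    · exact ⟨fun hc => absurd (ha.injective hc) h2.ne, Or.inl ⟨u, h1, h2.le, rfl⟩⟩
    · exact ⟨fun hc => hab v u hc.symm, Or.inr ⟨u, h1, h2, rfl⟩⟩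
  · rintro ⟨hne, (⟨u, h1, h2, rfl⟩ | ⟨u, h1, h2, rfl⟩)⟩
    · refine Or.inl ⟨u, h1, lt_of_le_of_ne h2 fun hc => hne ?_, rfl⟩
      rw [hc]
    · exact Or.inr ⟨u, h1, h2, rfl⟩

include ha hb hab in
lemma erase_b_max (hv : v ∈ γ) (hmax : ∀ u ∈ γ, u ≤ v) :
    (mixA a b γ v).erase (b v) = γ.image a := by
  ext x
  rw [Finset.mem_erase, mem_mixA_iff, Finset.mem_image]
  constructor
  · rintro ⟨hne, (⟨u, h1, h2, rfl⟩ | ⟨u, h1, h2, rfl⟩)⟩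
    · exact ⟨u, h1, rfl⟩
    · exact absurd (congrArg b (le_antisymm (hmax u h1) h2)) hne
  · rintro ⟨u, h1, rfl⟩
    exact ⟨hab u v, Or.inl ⟨u, h1, hmax u h1, rfl⟩⟩

include ha hb hab in
lemma erase_b_succ (hv : v ∈ γ) (hv' : v' ∈ γ) (hlt : v < v')
    (hcons : ∀ u ∈ γ, u ≤ v ∨ v' ≤ u) :
    (mixA a b γ v).erase (b v) = mixB a b γ v' := by
  ext x
  rw [Finset.mem_erase, mem_mixA_iff, mem_mixB_iff]
  constructor
  · rintro ⟨hne, (⟨u, h1, h2, rfl⟩ | ⟨u, h1, h2, rfl⟩)⟩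
    · exact Or.inl ⟨u, h1, h2.trans_lt hlt, rfl⟩
    · refine Or.inr ⟨u, h1, ?_, rfl⟩
      rcases hcons u h1 with h | h
      · exact absurd (congrArg b (le_antisymm h h2)) hne
      · exact h
  · rintro (⟨u, h1, h2, rfl⟩ | ⟨u, h1, h2, rfl⟩)
    · refine ⟨hab u v, Or.inl ⟨u, h1, ?_, rfl⟩⟩
      rcases hcons u h1 with h | h
      · exact h
      · exact absurd h2 (not_lt.mpr h)
    · refine ⟨fun hc => ?_, Or.inr ⟨u, h1, hlt.le.trans h2, rfl⟩⟩
      obtain rfl := hb.injective hc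
      exact absurd h2 (not_le.mpr hlt)

include ha hb hab in
lemma erase_a_lt (hu : u ∈ γ) (hlt : u < v) :
    (mixA a b γ v).erase (a u) = mixA a b (γ.erase u) v := by
  ext x
  rw [Finset.mem_erase, mem_mixA_iff, mem_mixA_iff]
  constructor
  · rintro ⟨hne, (⟨w, h1, h2, rfl⟩ | ⟨w, h1, h2, rfl⟩)⟩
    · refine Or.inl ⟨w, Finset.mem_erase.mpr ⟨fun hc => hne (by rw [hc]), h1⟩, h2, rfl⟩
    · exact Or.inr ⟨w, Finset.mem_erase.mpr ⟨fun hc => absurd (hc ▸ h2) (not_le.mpr hlt), h1⟩, h2, rfl⟩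
  · rintro (⟨w, h1, h2, rfl⟩ | ⟨w, h1, h2, rfl⟩)
    · obtain ⟨hne, h1⟩ := Finset.mem_erase.mp h1
      exact ⟨fun hc => hne (ha.injective hc), Or.inl ⟨w, h1, h2, rfl⟩⟩
    · obtain ⟨hne, h1⟩ := Finset.mem_erase.mp h1
      exact ⟨fun hc => hab u w hc.symm, Or.inr ⟨w, h1, h2, rfl⟩⟩

include ha hb hab in
lemma erase_b_gt (hu : u ∈ γ) (hgt : v < u) :
    (mixA a b γ v).erase (b u) = mixA a b (γ.erase u) v := by
  ext x
  rw [Finset.mem_erase, mem_mixA_iff, mem_mixA_iff]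
  constructor
  · rintro ⟨hne, (⟨w, h1, h2, rfl⟩ | ⟨w, h1, h2, rfl⟩)⟩
    · exact Or.inl ⟨w, Finset.mem_erase.mpr ⟨fun hc => absurd (hc ▸ h2) (not_le.mpr hgt), h1⟩, h2, rfl⟩
    · refine Or.inr ⟨w, Finset.mem_erase.mpr ⟨fun hc => hne (by rw [hc]), h1⟩, h2, rfl⟩
  · rintro (⟨w, h1, h2, rfl⟩ | ⟨w, h1, h2, rfl⟩)
    · obtain ⟨hne, h1⟩ := Finset.mem_erase.mp h1
      exact ⟨fun hc => hab w u hc, Or.inl ⟨w, h1, h2, rfl⟩⟩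
    · obtain ⟨hne, h1⟩ := Finset.mem_erase.mp h1
      exact ⟨fun hc => hne (hb.injective hc), Or.inr ⟨w, h1, h2, rfl⟩⟩

lemma mixB_min (hmin : ∀ u ∈ γ, v ≤ u) : mixB a b γ v = γ.image b := by
  rw [mixB]
  have h1 : (γ.filter fun u => u < v) = ∅ :=
    Finset.filter_eq_empty_iff.mpr fun u hu => not_lt.mpr (hmin _ hu)
  have h2 : (γ.filter fun u => v ≤ u) = γ :=
    Finset.filter_true_of_mem hmin
  rw [h1, h2, Finset.image_empty, Finset.empty_union]

lemma mixA_max (hmax : ∀ u ∈ γ, u ≤ v) (hv : v ∈ γ) :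
    mixA a b γ v = γ.image a ∪ {b v} := by
  rw [mixA]
  have h1 : (γ.filter fun u => u ≤ v) = γ := Finset.filter_true_of_mem hmax
  have h2 : (γ.filter fun u => v ≤ u) = {v} := by
    ext u
    simp only [Finset.mem_filter, Finset.mem_singleton]
    exact ⟨fun ⟨h3, h4⟩ => le_antisymm (hmax u h3) h4, fun h => by subst h; exact ⟨hv, le_rfl⟩⟩
  rw [h1, h2, Finset.image_singleton]

-- prismVF lemmas
variable {C : Set (Finset V)} {s t' : Finset U} {δ : Finset V}

lemma mem_prismVF_iff {p : Finset U × Finset U} :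
    p ∈ prismVF a b C ↔ ∃ γ ∈ C, ∃ v ∈ γ, p = (mixB a b γ v, mixA a b γ v) := Iff.rfl

include hb hab in
lemma crit_image_a : IsCritical (prismVF a b C) (δ.image a) := by
  rintro p ⟨γ, hγ, v, hv, rfl⟩
  constructor
  · intro hc
    have hc' : mixB a b γ v = δ.image a := hc
    have : b v ∈ mixB a b γ v := (b_mem_mixB hb hab).mpr ⟨hv, le_rfl⟩
    rw [hc'] at this
    exact b_not_mem_image_a hab this
  · intro hc
    have hc' : mixA a b γ v = δ.image a := hc
    have : b v ∈ mixA a b γ v := (b_mem_mixA hb hab).mpr ⟨hv, le_rfl⟩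
    rw [hc'] at this
    exact b_not_mem_image_a hab this

lemma not_crit_mixB (hγC : γ ∈ C) (hv : v ∈ γ) :
    ¬ IsCritical (prismVF a b C) (mixB a b γ v) := by
  intro h
  exact (h _ ⟨γ, hγC, v, hv, rfl⟩).1 rfl

lemma not_crit_mixA (hγC : γ ∈ C) (hv : v ∈ γ) :
    ¬ IsCritical (prismVF a b C) (mixA a b γ v) := by
  intro h
  exact (h _ ⟨γ, hγC, v, hv, rfl⟩).2 rfl

include ha hb hab in
lemma not_head_of_ab (h1 : a w ∈ s) (h2 : b w ∈ s) : (s, t') ∉ prismVF a b C := by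
  rintro ⟨γ, hγ, v, hv, heq⟩
  have hs : s = mixB a b γ v := congrArg Prod.fst heq
  rw [hs, a_mem_mixB ha hab] at h1
  rw [hs, b_mem_mixB hb hab] at h2
  exact absurd h2.2 (not_le.mpr h1.2)

include ha hb hab in
lemma not_snd_mixA (h : ∀ w, a w ∉ t') : (s, t') ∉ prismVF a b C := by
  rintro ⟨γ, hγ, v, hv, heq⟩
  have ht : t' = mixA a b γ v := congrArg Prod.snd heq
  have : a v ∈ mixA a b γ v := (a_mem_mixA ha hab).mpr ⟨hv, le_rfl⟩
  rw [← ht] at this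
  exact h v this

-- incidence lemmas

lemma incidence_erase {t : Finset U} {x : U} (hx : x ∈ t) :
    incidence t (t.erase x) = (-1 : ℤ) ^ (t.filter fun u => u < x).card := by
  rw [incidence, if_pos ⟨Finset.erase_subset _ _, (Finset.card_erase_add_one hx).symm⟩,
    Finset.sdiff_erase_self hx, Finset.sum_singleton]

lemma incidence_image {f : V → U} (hf : StrictMono f) (τ σ : Finset V) :
    incidence (τ.image f) (σ.image f) = incidence τ σ := by
  rw [incidence, incidence]
  by_cases h : σ ⊆ τ ∧ τ.card = σ.card + 1
  · rw [if_pos h, if_pos ?_]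
    · rw [← Finset.image_sdiff _ _ hf.injective,
        Finset.sum_image (fun x _ y _ h => hf.injective h)]
      refine Finset.sum_congr rfl fun v hv => ?_
      congr 1
      rw [Finset.filter_image]
      rw [Finset.card_image_of_injective _ hf.injective]
      congr 1
      ext u
      simp only [Finset.mem_filter, hf.lt_iff_lt]
    · exact ⟨Finset.image_subset_image h.1, by
        rw [Finset.card_image_of_injective _ hf.injective,
          Finset.card_image_of_injective _ hf.injective, h.2]⟩
  · rw [if_neg h, if_neg ?_]
    intro hc
    refine h ⟨(Finset.image_subset_image_iff hf.injective).mp hc.1, ?_⟩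
    obtain ⟨hc1, hc2⟩ := hc
    rwa [Finset.card_image_of_injective _ hf.injective,
      Finset.card_image_of_injective _ hf.injective] at hc2

variable (hord : ∀ u v : V, a u < b v)

include ha hb hab hord in
lemma filt_lt_a (hv : v ∈ γ) :
    ((mixA a b γ v).filter fun x => x < a v) = (γ.filter fun u => u < v).image a := by
  ext x
  simp only [Finset.mem_filter, Finset.mem_image]
  constructor
  · rintro ⟨h1, h2⟩
    rcases mem_mixA_iff.mp h1 with ⟨u', hu1, hu2, rfl⟩ | ⟨u', hu1, hu2, rfl⟩
    · exact ⟨u', ⟨hu1, ha.lt_iff_lt.mp h2⟩, rfl⟩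
    · exact absurd h2 (not_lt.mpr (hord v u').le)
  · rintro ⟨u', ⟨hu1, hu2⟩, rfl⟩
    exact ⟨mem_mixA_iff.mpr (Or.inl ⟨u', hu1, hu2.le, rfl⟩), ha.lt_iff_lt.mpr hu2⟩

include ha hb hab hord in
lemma filt_lt_b (hv : v ∈ γ) :
    ((mixA a b γ v).filter fun x => x < b v) = (γ.filter fun u => u ≤ v).image a := by
  ext x
  simp only [Finset.mem_filter, Finset.mem_image]
  constructor
  · rintro ⟨h1, h2⟩
    rcases mem_mixA_iff.mp h1 with ⟨u', hu1, hu2, rfl⟩ | ⟨u', hu1, hu2, rfl⟩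
    · exact ⟨u', ⟨hu1, hu2⟩, rfl⟩
    · exact absurd (hb.lt_iff_lt.mp h2) (not_lt.mpr hu2)
  · rintro ⟨u', ⟨hu1, hu2⟩, rfl⟩
    exact ⟨mem_mixA_iff.mpr (Or.inl ⟨u', hu1, hu2, rfl⟩), hord u' v⟩

-- facet classification

include ha hb hab in
lemma facet_classify {C : Set (Finset V)} (hCcl : ∀ δ : Finset V, δ ⊆ σ → δ.Nonempty → δ ∈ C)
    (hσC : σ ∈ C) (hv : v ∈ σ) {s : Finset U}
    (hs : s ⊆ mixA a b σ v) (hcard : s.card + 1 = (mixA a b σ v).card)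
    (hnm : (s, mixA a b σ v) ∉ prismVF a b C)
    (hhc : (∃ t', (s, t') ∈ prismVF a b C) ∨ IsCritical (prismVF a b C) s) :
    (∃ v' ∈ σ, v < v' ∧ (∀ u ∈ σ, u ≤ v ∨ v' ≤ u) ∧ s = mixB a b σ v') ∨
      ((∀ u ∈ σ, u ≤ v) ∧ s = σ.image a) := by
  -- s is obtained from mixA by erasing one element
  have hsd : (mixA a b σ v \ s).card = 1 := by
    rw [Finset.card_sdiff_of_subset hs]
    omega
  obtain ⟨x, hx⟩ := Finset.card_eq_one.mp hsd
  have hxm : x ∈ mixA a b σ v ∧ x ∉ s := by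
    have : x ∈ mixA a b σ v \ s := hx ▸ Finset.mem_singleton_self x
    exact Finset.mem_sdiff.mp this
  have hsx : s = (mixA a b σ v).erase x := by
    apply Finset.eq_of_subset_of_card_le
    · exact Finset.subset_erase.mpr ⟨hs, hxm.2⟩
    · rw [Finset.card_erase_of_mem hxm.1]
      omega
  -- helper: the mixA-of-erased cases are impossible
  have himp : ∀ u ∈ σ, u ≠ v → s = mixA a b (σ.erase u) v → False := by
    intro u hu hune hseq
    have hvmem : v ∈ σ.erase u := Finset.mem_erase.mpr ⟨hune.symm, hv⟩
    have hC' : σ.erase u ∈ C := hCcl _ (Finset.erase_subset _ _) ⟨v, hvmem⟩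
    rcases hhc with ⟨t', htm⟩ | hcrit
    · rw [hseq] at htm
      exact not_head_of_ab ha hb hab ((a_mem_mixA ha hab).mpr ⟨hvmem, le_rfl⟩)
        ((b_mem_mixA hb hab).mpr ⟨hvmem, le_rfl⟩) htm
    · rw [hseq] at hcrit
      exact not_crit_mixA hC' hvmem hcrit
  rcases mem_mixA_iff.mp hxm.1 with ⟨u', hu1, hu2, rfl⟩ | ⟨u', hu1, hu2, rfl⟩
  · -- x = a u', u' ≤ v
    rcases hu2.lt_or_eq with hlt | rfl
    · exact (himp u' hu1 hlt.ne (hsx.trans (erase_a_lt ha hb hab hu1 hlt))).elim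
    · -- x = a v : s = mixB σ v, contradicting hnm
      rw [← mixB_eq_erase ha hb hab hv] at hsx
      exact absurd ⟨σ, hσC, u', hu1, by rw [hsx]⟩ hnm
  · -- x = b u', v ≤ u'
    rcases hu2.lt_or_eq with hlt | rfl
    · exact (himp u' hu1 hlt.ne' (hsx.trans (erase_b_gt ha hb hab hu1 hlt))).elim
    · -- x = b v (here u' got identified with v)
      by_cases hmax : ∀ w ∈ σ, w ≤ v
      · exact Or.inr ⟨hmax, hsx.trans (erase_b_max ha hb hab hv hmax)⟩
      · push_neg at hmax
        obtain ⟨w, hw1, hw2⟩ := hmax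
        have hne : (σ.filter fun z => v < z).Nonempty :=
          ⟨w, Finset.mem_filter.mpr ⟨hw1, hw2⟩⟩
        have hv'mem : (σ.filter fun z => v < z).min' hne ∈ σ ∧
            v < (σ.filter fun z => v < z).min' hne :=
          Finset.mem_filter.mp ((σ.filter fun z => v < z).min'_mem hne)
        have hcons : ∀ z ∈ σ, z ≤ v ∨ (σ.filter fun z => v < z).min' hne ≤ z := by
          intro z hz
          rcases le_or_gt z v with h | h
          · exact Or.inl h
          · exact Or.inr (Finset.min'_le _ _ (Finset.mem_filter.mpr ⟨hz, h⟩))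
        exact Or.inl ⟨_, hv'mem.1, hv'mem.2, hcons,
          hsx.trans (erase_b_succ ha hb hab hv hv'mem.1 hv'mem.2 hcons)⟩

end Aux

lemma ExtTraj.ext' {U : Type*} {W : Set (Finset U × Finset U)} {P Q : ExtTraj W}
    (hk : P.k = Q.k) (ht : P.t = Q.t) (hs : P.s = Q.s) : P = Q := by
  cases P; cases Q
  dsimp at hk ht hs
  subst hk; subst ht; subst hs
  rfl

/-- For a `(q+1)`-simplex `τ ∈ B` with `τ_B̄ ∉ (A∩B)_B̄` and a
`q`-dimensional facet `σ ∈ A ∩ B` of `τ`, there is exactly one extended `𝒱`-trajectory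
beginning `τ_B̄, σ_B̄, …` whose terminal simplex is `𝒱`-critical; its terminal simplex
is `σ_Ā`, and its weight is `⟨τ_B̄, σ_B̄⟩ = ⟨τ, σ⟩`. -/
theorem unique_trajectory_through_intersection
    {V : Type*} {U : Type*} [Fintype V] [LinearOrder V] [LinearOrder U]
    (X A B : Set (Finset V)) (a b : V → U)
    (hX : IsComplex X) (hA : IsComplex A) (hB : IsComplex B)
    (hUnion : A ∪ B = X)
    (ha : StrictMono a) (hb : StrictMono b)
    (hab : ∀ u v : V, a u ≠ b v)
    (hord : ∀ u v : V, a u < b v)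
    (τ σ : Finset V) (hτB : τ ∈ B) (hτnA : τ ∉ A) (hσA : σ ∈ A) (hσB : σ ∈ B)
    (hsub : σ ⊆ τ) (hcard : τ.card = σ.card + 1) :
    (∃! P : ExtTraj (prismVF a b (A ∩ B)),
        P.t 0 = τ.image b ∧ P.s 1 = σ.image b ∧
          IsCritical (prismVF a b (A ∩ B)) (P.s (P.k + 1))) ∧
      (∀ P : ExtTraj (prismVF a b (A ∩ B)),
        P.t 0 = τ.image b → P.s 1 = σ.image b →
          IsCritical (prismVF a b (A ∩ B)) (P.s (P.k + 1)) →
          P.s (P.k + 1) = σ.image a ∧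
            ExtTraj.weight P = incidence (τ.image b) (σ.image b)) ∧
      incidence (τ.image b) (σ.image b) = incidence τ σ := by
  classical
  have hσAB : σ ∈ A ∩ B := ⟨hσA, hσB⟩
  have hσne : σ.Nonempty := (hA.2 σ hσA).1
  set n := σ.card with hn
  have hn1 : 1 ≤ n := Finset.card_pos.mpr hσne
  set l := σ.sort (· ≤ ·) with hl
  have hlen : l.length = n := Finset.length_sort _
  set elt : ℕ → V := fun j => l.getD j (σ.min' hσne) with helt
  have hEget : ∀ j, ∀ h : j < l.length, elt j = l.get ⟨j, h⟩ := by
    intro j h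
    simp only [helt]
    exact List.getD_eq_getElem _ _ h
  have hEmem : ∀ j, j < n → elt j ∈ σ := by
    intro j hj
    have hj' : j < l.length := by omega
    rw [hEget j hj']
    exact (Finset.mem_sort (α := V) (· ≤ ·)).mp (List.get_mem l ⟨j, hj'⟩)
  have hElt : ∀ i j, i < j → j < n → elt i < elt j := by
    intro i j hij hj
    have hj' : j < l.length := by omega
    have hi' : i < l.length := by omega
    rw [hEget i hi', hEget j hj']
    exact (Finset.sortedLT_sort σ) (by exact Fin.mk_lt_mk.mpr hij)
  have hEle : ∀ i j, i ≤ j → j < n → elt i ≤ elt j := by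
    intro i j hij hj
    rcases Nat.eq_or_lt_of_le hij with rfl | h
    · exact le_rfl
    · exact (hElt i j h hj).le
  have hEsurj : ∀ u ∈ σ, ∃ i, i < n ∧ elt i = u := by
    intro u hu
    have : u ∈ l := (Finset.mem_sort (α := V) (· ≤ ·)).mpr hu
    obtain ⟨⟨i, hi⟩, hget⟩ := List.mem_iff_get.mp this
    exact ⟨i, by omega, by rw [hEget i hi]; exact hget⟩
  have hE0 : ∀ u ∈ σ, elt 0 ≤ u := by
    intro u hu
    obtain ⟨i, hi, rfl⟩ := hEsurj u hu
    exact hEle 0 i (by omega) hi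
  have hEmax : ∀ u ∈ σ, u ≤ elt (n - 1) := by
    intro u hu
    obtain ⟨i, hi, rfl⟩ := hEsurj u hu
    exact hEle i (n - 1) (by omega) (by omega)
  have hEcons : ∀ j, j + 1 < n → ∀ u ∈ σ, u ≤ elt j ∨ elt (j + 1) ≤ u := by
    intro j hj u hu
    obtain ⟨i, hi, rfl⟩ := hEsurj u hu
    rcases le_or_gt i j with h | h
    · exact Or.inl (hEle i j h (by omega))
    · exact Or.inr (hEle (j + 1) i h hi)
  have hCcl : ∀ δ : Finset V, δ ⊆ σ → δ.Nonempty → δ ∈ A ∩ B := fun δ h1 h2 =>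
    ⟨(hA.2 σ hσA).2 δ h1 h2, (hB.2 σ hσB).2 δ h1 h2⟩
  have hSb : mixB a b σ (elt 0) = σ.image b := mixB_min hE0
  have hct0 : (τ.image b).card = n + 1 := by
    rw [Finset.card_image_of_injective _ hb.injective, hcard]
  have hcmA : ∀ j, j < n → (mixA a b σ (elt j)).card = n + 1 := fun j hj =>
    card_mixA ha hb hab (hEmem j hj)
  have hcmB : ∀ j, j < n → (mixB a b σ (elt j)).card = n := fun j hj =>
    card_mixB ha hb hab (hEmem j hj)
  -- description of an arbitrary admissible trajectory
  have desc : ∀ P : ExtTraj (prismVF a b (A ∩ B)),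
      P.t 0 = τ.image b → P.s 1 = σ.image b →
      IsCritical (prismVF a b (A ∩ B)) (P.s (P.k + 1)) →
      P.k = n ∧ (∀ i, 1 ≤ i → i ≤ n →
        P.s i = mixB a b σ (elt (i - 1)) ∧ P.t i = mixA a b σ (elt (i - 1))) ∧
        P.s (n + 1) = σ.image a := by
    intro P hP1 hP2 hP3
    have decode : ∀ r w, 1 ≤ r → r ≤ P.k → w ∈ σ → P.s r = mixB a b σ w →
        P.t r = mixA a b σ w := by
      intro r w h1 h2 hw hs
      obtain ⟨γ, hγ, v, hv, heq⟩ := P.mem r h1 h2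
      have hs1 : P.s r = mixB a b γ v := congrArg Prod.fst heq
      have ht1 : P.t r = mixA a b γ v := congrArg Prod.snd heq
      obtain ⟨h3, h4⟩ := mixB_inj ha hb hab hv hw (hs1.symm.trans hs)
      subst h3; subst h4
      exact ht1
    have kpos : 1 ≤ P.k := by
      by_contra h
      have hk0 : P.k = 0 := by omega
      rw [hk0, hP2, ← hSb] at hP3
      exact not_crit_mixB hσAB (hEmem 0 (by omega)) hP3
    have stepc : ∀ r, 1 ≤ r → r ≤ P.k → r ≤ n → P.t r = mixA a b σ (elt (r - 1)) →
        (∃ v' ∈ σ, elt (r - 1) < v' ∧ (∀ u ∈ σ, u ≤ elt (r - 1) ∨ v' ≤ u) ∧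
          P.s (r + 1) = mixB a b σ v') ∨
        ((∀ u ∈ σ, u ≤ elt (r - 1)) ∧ P.s (r + 1) = σ.image a) := by
      intro r h1 h2 h3 ht
      have hvm : elt (r - 1) ∈ σ := hEmem _ (by omega)
      apply facet_classify ha hb hab hCcl hσAB hvm
      · have h4 := P.sub (r + 1) (by omega) (by omega)
        rw [Nat.add_sub_cancel, ht] at h4
        exact h4
      · have h4 := P.dim_s (r + 1) (by omega) (by omega)
        rw [hP1, hct0] at h4
        rw [hcmA (r - 1) (by omega)]
        exact h4
      · have h4 := P.nmem (r + 1) (by omega) (by omega)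
        rw [Nat.add_sub_cancel, ht] at h4
        exact h4
      · rcases Nat.lt_or_ge P.k (r + 1) with h | h
        · have hkr : P.k = r := by omega
          right
          rw [hkr] at hP3
          exact hP3
        · exact Or.inl ⟨P.t (r + 1), P.mem (r + 1) (by omega) h⟩
    have main : ∀ r, 1 ≤ r → r ≤ n →
        r ≤ P.k ∧ P.s r = mixB a b σ (elt (r - 1)) ∧ P.t r = mixA a b σ (elt (r - 1)) := by
      intro r
      induction r with
      | zero => intro h1; omega
      | succ r ih =>
        intro h1 h2
        by_cases hr0 : r = 0
        · subst hr0
          have hs1 : P.s 1 = mixB a b σ (elt 0) := by rw [hP2, hSb]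
          exact ⟨kpos, hs1, decode 1 (elt 0) le_rfl kpos (hEmem 0 (by omega)) hs1⟩
        · have h1r : 1 ≤ r := by omega
          obtain ⟨hk, hs, ht⟩ := ih h1r (by omega)
          rcases stepc r h1r hk (by omega) ht with ⟨v', hv'1, hv'2, hv'3, hs'⟩ | ⟨hmax, _⟩
          · have hv'eq : v' = elt r := by
              have hc1 := hEcons (r - 1) (by omega)
              have hrr : r - 1 + 1 = r := by omega
              rw [hrr] at hc1
              have h5 : elt r ≤ v' := by
                rcases hc1 v' hv'1 with h | h
                · exact absurd h (not_le.mpr hv'2)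
                · exact h
              have h6 : v' ≤ elt r := by
                rcases hv'3 (elt r) (hEmem r (by omega)) with h | h
                · exact absurd h (not_le.mpr (hElt (r - 1) r (by omega) (by omega)))
                · exact h
              exact le_antisymm h6 h5
            rw [hv'eq] at hs'
            have hk' : r + 1 ≤ P.k := by
              by_contra hcon
              have hkr : P.k = r := by omega
              rw [hkr, hs'] at hP3
              exact not_crit_mixB hσAB (hEmem r (by omega)) hP3
            have hs'' : P.s (r + 1) = mixB a b σ (elt (r + 1 - 1)) := by
              rw [Nat.add_sub_cancel]; exact hs'
            exact ⟨hk', hs'', by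
              rw [Nat.add_sub_cancel]
              exact decode (r + 1) (elt r) (by omega) hk' (hEmem r (by omega)) hs'⟩
          · exact absurd (hmax (elt r) (hEmem r (by omega)))
              (not_le.mpr (hElt (r - 1) r (by omega) (by omega)))
    obtain ⟨hkn, hsn, htn⟩ := main n hn1 le_rfl
    have hterm : P.k = n ∧ P.s (n + 1) = σ.image a := by
      rcases stepc n hn1 hkn le_rfl htn with ⟨v', hv'1, hv'2, _, _⟩ | ⟨_, hsa⟩
      · exact absurd (hEmax v' hv'1) (not_le.mpr hv'2)
      · refine ⟨?_, hsa⟩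
        by_contra hcon
        have hk1 : n + 1 ≤ P.k := by omega
        have hmem := P.mem (n + 1) (by omega) hk1
        have hfst := (crit_image_a hb hab (δ := σ) (C := A ∩ B) _ hmem).1
        rw [hsa] at hfst
        exact hfst rfl
    exact ⟨hterm.1, fun i hi1 hi2 => ⟨(main i hi1 hi2).2.1, (main i hi1 hi2).2.2⟩, hterm.2⟩
  -- weight of any admissible trajectory
  have hwt : ∀ P : ExtTraj (prismVF a b (A ∩ B)),
      P.t 0 = τ.image b → P.s 1 = σ.image b →
      IsCritical (prismVF a b (A ∩ B)) (P.s (P.k + 1)) →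
      ExtTraj.weight P = incidence (τ.image b) (σ.image b) := by
    intro P h1 h2 h3
    obtain ⟨hk, hmid, hterm⟩ := desc P h1 h2 h3
    obtain ⟨m, hm⟩ : ∃ m, n = m + 1 := ⟨n - 1, by omega⟩
    have hinc1 : ∀ r, 1 ≤ r → r ≤ n →
        incidence (mixA a b σ (elt (r - 1))) (mixB a b σ (elt (r - 1))) =
          (-1 : ℤ) ^ ((σ.filter fun u => u < elt (r - 1)).card) := by
      intro r hr1 hr2
      have hvm : elt (r - 1) ∈ σ := hEmem _ (by omega)
      rw [mixB_eq_erase ha hb hab hvm,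
        incidence_erase ((a_mem_mixA ha hab).mpr ⟨hvm, le_rfl⟩),
        filt_lt_a ha hb hab hord hvm, Finset.card_image_of_injective _ ha.injective]
    have hinc2 : ∀ r, 1 ≤ r → r < n →
        incidence (mixA a b σ (elt (r - 1))) (mixB a b σ (elt r)) =
          (-1 : ℤ) ^ ((σ.filter fun u => u ≤ elt (r - 1)).card) := by
      intro r hr1 hr2
      have hvm : elt (r - 1) ∈ σ := hEmem _ (by omega)
      have hc1 := hEcons (r - 1) (by omega)
      have hrr : r - 1 + 1 = r := by omega
      rw [hrr] at hc1
      rw [← erase_b_succ ha hb hab hvm (hEmem r (by omega))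
          (hElt (r - 1) r (by omega) (by omega)) hc1,
        incidence_erase ((b_mem_mixA hb hab).mpr ⟨hvm, le_rfl⟩),
        filt_lt_b ha hb hab hord hvm, Finset.card_image_of_injective _ ha.injective]
    have hfeq : ∀ r, 1 ≤ r → r < n →
        (σ.filter fun u => u ≤ elt (r - 1)) = σ.filter fun u => u < elt r := by
      intro r hr1 hr2
      have hc1 := hEcons (r - 1) (by omega)
      have hrr : r - 1 + 1 = r := by omega
      rw [hrr] at hc1
      ext u
      simp only [Finset.mem_filter, and_congr_right_iff]
      intro hu
      constructor
      · exact fun h => h.trans_lt (hElt (r - 1) r (by omega) (by omega))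
      · intro h
        rcases hc1 u hu with h' | h'
        · exact h'
        · exact absurd h (not_lt.mpr h')
    have hPs : ∀ i, 1 ≤ i → i ≤ n → P.s i = mixB a b σ (elt (i - 1)) :=
      fun i a1 a2 => (hmid i a1 a2).1
    have hPt : ∀ i, 1 ≤ i → i ≤ n → P.t i = mixA a b σ (elt (i - 1)) :=
      fun i a1 a2 => (hmid i a1 a2).2
    rw [ExtTraj.weight, hk, hm, Finset.prod_range_succ']
    have hg0 : -(incidence (P.t 0) (P.s (0 + 1)) * incidence (P.t (0 + 1)) (P.s (0 + 1))) =
        -(incidence (τ.image b) (σ.image b)) := by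
      have hz : incidence (P.t 1) (P.s 1) = 1 := by
        rw [hPt 1 le_rfl hn1, hPs 1 le_rfl hn1, hinc1 1 le_rfl hn1]
        have : (σ.filter fun u => u < elt (1 - 1)) = ∅ :=
          Finset.filter_eq_empty_iff.mpr fun u hu => not_lt.mpr (hE0 u hu)
        rw [this, Finset.card_empty, pow_zero]
      show -(incidence (P.t 0) (P.s 1) * incidence (P.t 1) (P.s 1)) = _
      rw [hz, h1, h2, mul_one]
    have hgm : ∀ i ∈ Finset.range m,
        -(incidence (P.t (i + 1)) (P.s (i + 1 + 1)) *
          incidence (P.t (i + 1 + 1)) (P.s (i + 1 + 1))) = -1 := by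
      intro i hi
      have him : i < m := Finset.mem_range.mp hi
      have ha1 : incidence (P.t (i + 1)) (P.s (i + 2)) =
          (-1 : ℤ) ^ ((σ.filter fun u => u ≤ elt i).card) := by
        rw [hPt (i + 1) (by omega) (by omega), hPs (i + 2) (by omega) (by omega)]
        have e1 : (i + 1 : ℕ) - 1 = i := by omega
        have e2 : (i + 2 : ℕ) - 1 = i + 1 := by omega
        rw [e1, e2]
        have := hinc2 (i + 1) (by omega) (by omega)
        rw [e1] at this
        exact this
      have ha2 : incidence (P.t (i + 2)) (P.s (i + 2)) =
          (-1 : ℤ) ^ ((σ.filter fun u => u ≤ elt i).card) := by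
        rw [hPt (i + 2) (by omega) (by omega), hPs (i + 2) (by omega) (by omega)]
        have e2 : (i + 2 : ℕ) - 1 = i + 1 := by omega
        rw [e2]
        have := hinc1 (i + 2) (by omega) (by omega)
        rw [e2] at this
        rw [this]
        congr 1
        have := hfeq (i + 1) (by omega) (by omega)
        have e1 : (i + 1 : ℕ) - 1 = i := by omega
        rw [e1] at this
        rw [this]
      show -(incidence (P.t (i + 1)) (P.s (i + 2)) * incidence (P.t (i + 2)) (P.s (i + 2))) = -1
      rw [ha1, ha2, ← pow_add]
      rw [Even.neg_one_pow ⟨_, rfl⟩]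
    have hprod : (∏ i ∈ Finset.range m,
        -(incidence (P.t (i + 1)) (P.s (i + 1 + 1)) *
          incidence (P.t (i + 1 + 1)) (P.s (i + 1 + 1)))) = (-1 : ℤ) ^ m := by
      rw [Finset.prod_congr rfl hgm, Finset.prod_const, Finset.card_range]
    have hlast : incidence (P.t (m + 1)) (P.s (m + 1 + 1)) = (-1 : ℤ) ^ (m + 1) := by
      have hnm1 : n - 1 = m := by omega
      have hvm : elt m ∈ σ := hEmem m (by omega)
      have hmax' : ∀ u ∈ σ, u ≤ elt m := by
        intro u hu
        have := hEmax u hu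
        rwa [hnm1] at this
      rw [← hm, hPt n hn1 le_rfl, show n + 1 = n + 1 from rfl]
      rw [hterm, hnm1]
      rw [← erase_b_max ha hb hab hvm hmax',
        incidence_erase ((b_mem_mixA hb hab).mpr ⟨hvm, le_rfl⟩),
        filt_lt_b ha hb hab hord hvm, Finset.card_image_of_injective _ ha.injective,
        Finset.filter_true_of_mem hmax', ← hn, hm]
    rw [hprod, hg0, hlast]
    have hz2 : (-1 : ℤ) ^ m * (-1 : ℤ) ^ m = 1 := by
      rw [← pow_add]; exact Even.neg_one_pow ⟨m, rfl⟩
    rw [pow_succ]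
    linear_combination incidence (τ.image b) (σ.image b) * hz2
  -- construction of the explicit trajectory
  set tQ : ℕ → Finset U := fun i =>
    if i = 0 then τ.image b else if i ≤ n then mixA a b σ (elt (i - 1)) else ∅ with htQdef
  set sQ : ℕ → Finset U := fun i =>
    if i = 0 then ∅ else if i ≤ n then mixB a b σ (elt (i - 1))
    else if i = n + 1 then σ.image a else ∅ with hsQdef
  have htQ0 : tQ 0 = τ.image b := by simp [htQdef]
  have htQi : ∀ i, 1 ≤ i → i ≤ n → tQ i = mixA a b σ (elt (i - 1)) := by
    intro i h1 h2; simp only [htQdef]; rw [if_neg (by omega), if_pos h2]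
  have htQe : ∀ i, n < i → tQ i = ∅ := by
    intro i h; simp only [htQdef]; rw [if_neg (by omega), if_neg (by omega)]
  have hsQ0 : sQ 0 = ∅ := by simp [hsQdef]
  have hsQi : ∀ i, 1 ≤ i → i ≤ n → sQ i = mixB a b σ (elt (i - 1)) := by
    intro i h1 h2; simp only [hsQdef]; rw [if_neg (by omega), if_pos h2]
  have hsQn : sQ (n + 1) = σ.image a := by
    simp only [hsQdef]; rw [if_neg (by omega), if_neg (by omega)]; simp
  have hsQe : ∀ i, n + 1 < i → sQ i = ∅ := by
    intro i h; simp only [hsQdef]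
    rw [if_neg (by omega), if_neg (by omega), if_neg (by omega)]
  refine ⟨⟨⟨n, tQ, sQ, ?_, ?_, ?_, ?_, ?_, ?_, ?_⟩, ⟨?_, ?_, ?_⟩, ?_⟩,
    fun P hc1 hc2 hc3 => ⟨?_, hwt P hc1 hc2 hc3⟩, incidence_image hb τ σ⟩
  · -- dim_t
    intro i hi
    rw [htQ0, hct0]
    by_cases h0 : i = 0
    · rw [h0, htQ0, hct0]
    · rw [htQi i (by omega) hi, hcmA (i - 1) (by omega)]
  · -- dim_s
    intro i h1 h2
    rw [htQ0, hct0]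
    by_cases h : i ≤ n
    · rw [hsQi i h1 h, hcmB (i - 1) (by omega)]
    · have : i = n + 1 := by omega
      rw [this, hsQn, Finset.card_image_of_injective _ ha.injective]
  · -- mem
    intro i h1 h2
    rw [hsQi i h1 h2, htQi i h1 h2]
    exact ⟨σ, hσAB, elt (i - 1), hEmem _ (by omega), rfl⟩
  · -- sub
    intro i h1 h2
    by_cases hi1 : i = 1
    · rw [hi1, hsQi 1 le_rfl hn1, hSb]
      show σ.image b ⊆ tQ 0
      rw [htQ0]
      exact Finset.image_subset_image hsub
    · by_cases hin : i ≤ n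
      · rw [hsQi i h1 hin, htQi (i - 1) (by omega) (by omega)]
        have he2 : i - 1 - 1 = i - 2 := by omega
        rw [he2]
        have hvm : elt (i - 2) ∈ σ := hEmem _ (by omega)
        have hvm' : elt (i - 1) ∈ σ := hEmem _ (by omega)
        have hcc := hEcons (i - 2) (by omega)
        have he3 : i - 2 + 1 = i - 1 := by omega
        rw [he3] at hcc
        rw [← erase_b_succ ha hb hab hvm hvm' (hElt (i - 2) (i - 1) (by omega) (by omega)) hcc]
        exact Finset.erase_subset _ _
      · have hieq : i = n + 1 := by omega
        rw [hieq, hsQn, htQi (n + 1 - 1) (by omega) (by omega)]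
        have he2 : n + 1 - 1 - 1 = n - 1 := by omega
        rw [he2]
        have hvm : elt (n - 1) ∈ σ := hEmem _ (by omega)
        rw [← erase_b_max ha hb hab hvm hEmax]
        exact Finset.erase_subset _ _
  · -- nmem
    intro i h1 h2
    by_cases hi1 : i = 1
    · rw [hi1, show (1 : ℕ) - 1 = 0 from rfl, htQ0]
      exact not_snd_mixA ha hb hab fun w => a_not_mem_image_b hab
    · by_cases hin : i ≤ n
      · rw [hsQi i h1 hin, htQi (i - 1) (by omega) (by omega)]
        have he2 : i - 1 - 1 = i - 2 := by omega
        rw [he2]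
        rintro ⟨γ, hγ, v, hv, heq⟩
        have hfst : mixB a b σ (elt (i - 1)) = mixB a b γ v := congrArg Prod.fst heq
        have hsnd : mixA a b σ (elt (i - 2)) = mixA a b γ v := congrArg Prod.snd heq
        obtain ⟨h5, h6⟩ := mixA_inj ha hb hab (hEmem (i - 2) (by omega)) hv hsnd
        subst h5; subst h6
        obtain ⟨-, h7⟩ := mixB_inj ha hb hab (hEmem (i - 1) (by omega))
          (hEmem (i - 2) (by omega)) hfst
        exact absurd h7 (ne_of_gt (hElt (i - 2) (i - 1) (by omega) (by omega)))
      · have hieq : i = n + 1 := by omega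
        rw [hieq, hsQn]
        intro hmem
        exact (crit_image_a hb hab (δ := σ) (C := A ∩ B) _ hmem).1 rfl
  · -- pad_t
    exact fun i hi => htQe i hi
  · -- pad_s
    rintro i (rfl | h)
    · exact hsQ0
    · exact hsQe i h
  · -- Q.t 0 = τ.image b
    show tQ 0 = τ.image b
    exact htQ0
  · -- Q.s 1 = σ.image b
    show sQ 1 = σ.image b
    rw [hsQi 1 le_rfl hn1, hSb]
  · -- criticality of terminal
    show IsCritical (prismVF a b (A ∩ B)) (sQ (n + 1))
    rw [hsQn]
    exact crit_image_a hb hab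
  · -- uniqueness
    intro P hP
    obtain ⟨hc1, hc2, hc3⟩ := hP
    obtain ⟨hPk, hPmid, hPterm⟩ := desc P hc1 hc2 hc3
    refine ExtTraj.ext' hPk (funext fun i => ?_) (funext fun i => ?_)
    · show P.t i = tQ i
      by_cases h0 : i = 0
      · rw [h0, hc1, htQ0]
      · by_cases hin : i ≤ n
        · rw [(hPmid i (by omega) hin).2, htQi i (by omega) hin]
        · rw [P.pad_t i (by omega), htQe i (by omega)]
    · show P.s i = sQ i
      by_cases h0 : i = 0
      · rw [h0, hsQ0]
        exact P.pad_s 0 (Or.inl rfl)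
      · by_cases hin : i ≤ n
        · rw [(hPmid i (by omega) hin).1, hsQi i (by omega) hin]
        · by_cases hin1 : i = n + 1
          · rw [hin1, hPterm, hsQn]
          · rw [P.pad_s i (Or.inr (by omega)), hsQe i (by omega)]
  · -- terminal simplex of an arbitrary trajectory
    obtain ⟨hPk, hPmid, hPterm⟩ := desc P hc1 hc2 hc3
    rw [hPk]
    exact hPterm

end DMT
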